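/- arXiv:0705.0088 — 2 statements merged into one kernel-verified Lean document; each statement's English description precedes it below -/
import Mathlib

section
/- There exist sequences a_1, a_2, ... of positive integers and p_1, p_2, ... of primes such that for all i: v_{p_i}(2a_i^2+1) is odd and p_i ≡ 3 (mod 4), v_{p_i}(2a_i^4+4a_i^2+1) = 0; and for all j ≠ i: v_{p_i}(2a_j^2+1) = 0 and v_{p_i}(2a_j^4+4a_j^2+1) = 0. -/
/-!
Take `a₀ = 1`, `aₙ₊₁ = aₙ (2aₙ² + 1)`. Every `aₙ` is odd, so `2aₙ² + 1 ≡ 3 (mod 4)` is not a sum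
of two squares and has a prime factor `pₙ ≡ 3 (mod 4)` of odd multiplicity. Since `2aᵢ² + 1`
divides `aⱼ` for `i < j`, the numbers `2aᵢ² + 1` are pairwise coprime. Finally, `pᵢ` divides no
`2x⁴ + 4x² + 1`: modulo `pᵢ` we would get `(2aᵢ(x² + 1))² = -1`.
-/

def nestedSeq : ℕ → ℕ
  | 0 => 1
  | n + 1 => nestedSeq n * (2 * nestedSeq n ^ 2 + 1)

lemma nestedSeq_odd (n : ℕ) : Odd (nestedSeq n) := by
  induction n with
  | zero => exact odd_one
  | succ n ih => exact ih.mul ⟨nestedSeq n ^ 2, by ring⟩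

lemma two_mul_nestedSeq_sq_add_one_dvd {i j : ℕ} (hij : i < j) :
    2 * nestedSeq i ^ 2 + 1 ∣ nestedSeq j := by
  induction j, hij using Nat.le_induction with
  | base => exact Dvd.intro_left _ rfl
  | succ j _ ih => exact ih.mul_right _

lemma two_mul_nestedSeq_sq_add_one_ne_zero {R : Type*} [CommRing R] [Nontrivial R] {i j : ℕ}
    (hij : i ≠ j) (hi : 2 * (nestedSeq i : R) ^ 2 + 1 = 0) :
    2 * (nestedSeq j : R) ^ 2 + 1 ≠ 0 := by
  have cast_eq_zero {k l : ℕ} (hkl : k < l) (hk : 2 * (nestedSeq k : R) ^ 2 + 1 = 0) :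
      (nestedSeq l : R) = 0 := by
    obtain ⟨c, hc⟩ := two_mul_nestedSeq_sq_add_one_dvd hkl
    rw [hc]
    push_cast
    rw [hk, zero_mul]
  intro hj
  rcases hij.lt_or_gt with hlt | hlt
  · simp [cast_eq_zero hlt hi] at hj
  · simp [cast_eq_zero hlt hj] at hi

lemma two_mul_sq_add_one_mod_four {n : ℕ} (hn : Odd n) : (2 * n ^ 2 + 1) % 4 = 3 := by
  obtain ⟨k, rfl⟩ := hn
  ring_nf
  omega

lemma exists_prime_mod_four_eq_three_odd_padicValNat {n : ℕ} (hn : n % 4 = 3) :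
    ∃ q, q.Prime ∧ q % 4 = 3 ∧ Odd (padicValNat q n) := by
  by_contra! h
  obtain ⟨x, y, rfl⟩ := Nat.eq_sq_add_sq_iff.mpr fun q hq hq4 ↦
    Nat.not_odd_iff_even.mp (h q (Nat.prime_of_mem_primeFactors hq) hq4)
  have sq_mod_four (z : ℕ) : z ^ 2 % 4 = 0 ∨ z ^ 2 % 4 = 1 := by
    rcases Nat.even_or_odd' z with ⟨k, rfl | rfl⟩ <;> ring_nf <;> omega
  rcases sq_mod_four x with hx | hx <;> rcases sq_mod_four y with hy | hy <;> omega

lemma ZMod.mod_four_ne_three_of_two_mul_sq_add_one_eq_zero {p : ℕ} [Fact p.Prime] {a x : ZMod p}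
    (ha : 2 * a ^ 2 + 1 = 0) (hx : 2 * x ^ 4 + 4 * x ^ 2 + 1 = 0) : p % 4 ≠ 3 :=
  ZMod.mod_four_ne_three_of_sq_eq_neg_one (y := 2 * a * (x ^ 2 + 1))
    (by linear_combination (2 * a ^ 2) * hx + ha)

lemma padicValInt_eq_zero_of_intCast_ne_zero {p : ℕ} {z : ℤ} (h : (z : ZMod p) ≠ 0) :
    padicValInt p z = 0 :=
  padicValInt.eq_zero_of_not_dvd fun hz ↦ h ((ZMod.intCast_zmod_eq_zero_iff_dvd z p).mpr hz)

theorem exists_dual_primes :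
    ∃ (a : ℕ → ℤ) (p : ℕ → ℕ),
      (∀ i, 0 < a i) ∧ (∀ i, (p i).Prime) ∧
      (∀ i, Odd (padicValInt (p i) (2 * a i ^ 2 + 1)) ∧ p i % 4 = 3 ∧
        padicValInt (p i) (2 * a i ^ 4 + 4 * a i ^ 2 + 1) = 0) ∧
      (∀ i j, i ≠ j → padicValInt (p i) (2 * a j ^ 2 + 1) = 0 ∧
        padicValInt (p i) (2 * a j ^ 4 + 4 * a j ^ 2 + 1) = 0) := by
  choose p hp hp4 hodd using fun n ↦
    exists_prime_mod_four_eq_three_odd_padicValNat (two_mul_sq_add_one_mod_four (nestedSeq_odd n))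
  have hfact (i : ℕ) : Fact (p i).Prime := ⟨hp i⟩
  have hroot (i : ℕ) : 2 * (nestedSeq i : ZMod (p i)) ^ 2 + 1 = 0 := by
    exact_mod_cast (ZMod.natCast_eq_zero_iff _ _).mpr (dvd_of_one_le_padicValNat (hodd i).pos)
  have hquartic (i j : ℕ) :
      padicValInt (p i) (2 * (nestedSeq j : ℤ) ^ 4 + 4 * (nestedSeq j : ℤ) ^ 2 + 1) = 0 :=
    padicValInt_eq_zero_of_intCast_ne_zero fun h ↦
      ZMod.mod_four_ne_three_of_two_mul_sq_add_one_eq_zero (x := nestedSeq j) (hroot i)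
        (by exact_mod_cast h) (hp4 i)
  have hquadratic {i j : ℕ} (hij : i ≠ j) :
      padicValInt (p i) (2 * (nestedSeq j : ℤ) ^ 2 + 1) = 0 :=
    padicValInt_eq_zero_of_intCast_ne_zero
      (by exact_mod_cast two_mul_nestedSeq_sq_add_one_ne_zero hij (hroot i))
  exact ⟨fun n ↦ nestedSeq n, p, fun i ↦ Int.natCast_pos.mpr (nestedSeq_odd i).pos, hp,
    fun i ↦ ⟨by exact_mod_cast hodd i, hp4 i, hquartic i i⟩,
    fun i j hij ↦ ⟨hquadratic hij, hquartic i j⟩⟩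
end

section
/- For all positive integers i in the sequence constructed from Pell-equation arguments (a_1 = 1, and a_n an odd multiple of ∏_{j<n}(2a_j^2+1)(2a_j^4+4a_j^2+1) with 2a_n^2+1 not a square), the rational numbers (2a_i^2+1)(2a_i^4+4a_i^2+1), i = 1, 2, ..., are multiplicatively independent in Q^× modulo norms from Q(i)^×: no nontrivial product ∏_i ((2a_i^2+1)(2a_i^4+4a_i^2+1))^{ε_i} with ε_i ∈ {0,1} is a norm from Q(i)^×. -/
/-!
Let `n` be the largest index in `s`. Since `a n` is odd, `2 a_n² + 1 ≡ 3 (mod 4)`, so some prime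
`p ≡ 3 (mod 4)` divides it to an odd power. This `p` is coprime to the cofactor
`2 a_n⁴ + 4 a_n² + 1` and, as `p ∤ a n`, to every earlier factor, all of which divide `a n`.
Hence the product over `s` has odd `p`-adic valuation, whereas a sum of two rational squares has
even valuation at every prime `≡ 3 (mod 4)`.
-/

open Finset

theorem Int.even_padicValInt_of_eq_sq_add_sq {n x y : ℤ} (h : n = x ^ 2 + y ^ 2) {q : ℕ}
    [hq : Fact q.Prime] (hq3 : q % 4 = 3) : Even (padicValInt q n) := by
  rcases eq_or_ne n 0 with rfl | hn
  · simp
  have hnat : n.natAbs = x.natAbs ^ 2 + y.natAbs ^ 2 := by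
    rw [h, Int.natAbs_add_of_nonneg (sq_nonneg _) (sq_nonneg _), Int.natAbs_pow, Int.natAbs_pow]
  by_cases hqn : q ∣ n.natAbs
  · exact Nat.eq_sq_add_sq_iff.mp ⟨_, _, hnat⟩ q
      (Nat.mem_primeFactors.mpr ⟨hq.out, hqn, Int.natAbs_ne_zero.mpr hn⟩) hq3
  · simp [padicValInt, padicValNat.eq_zero_of_not_dvd hqn]

theorem Int.even_padicValInt_of_cast_eq_sq_add_sq {n : ℤ} {u v : ℚ}
    (h : (n : ℚ) = u ^ 2 + v ^ 2) {q : ℕ} [Fact q.Prime] (hq : q % 4 = 3) :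
    Even (padicValInt q n) := by
  rcases eq_or_ne n 0 with rfl | hn
  · simp
  have hd : ((u.den * v.den) ^ 2 : ℕ) ≠ 0 := by positivity
  have hcleared : n * ((u.den * v.den) ^ 2 : ℕ) = (u.num * v.den) ^ 2 + (v.num * u.den) ^ 2 := by
    have : (n : ℚ) * ((u.den * v.den) ^ 2 : ℕ) = (u.num * v.den) ^ 2 + (v.num * u.den) ^ 2 := by
      rw [h, ← Rat.mul_den_eq_num u, ← Rat.mul_den_eq_num v]
      push_cast
      ring
    exact_mod_cast this
  have heven := Int.even_padicValInt_of_eq_sq_add_sq hcleared hq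
  rw [padicValInt.mul hn (by exact_mod_cast hd), padicValInt.of_nat, padicValNat.pow,
    Nat.even_add] at heven
  exact heven.mpr (even_two_mul _)

theorem Int.exists_prime_mod_four_eq_three_odd_padicValInt {n : ℤ} (h0 : 0 ≤ n)
    (hn : n % 4 = 3) : ∃ p : ℕ, p.Prime ∧ p % 4 = 3 ∧ Odd (padicValInt p n) := by
  by_contra! hcon
  obtain ⟨x, y, hxy⟩ : ∃ x y : ℕ, n.natAbs = x ^ 2 + y ^ 2 :=
    Nat.eq_sq_add_sq_iff.mpr fun q hq hq3 =>
      Nat.not_odd_iff_even.mp (hcon q (Nat.prime_of_mem_primeFactors hq) hq3)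
  have hsum : (n : ZMod 4) = (x : ZMod 4) ^ 2 + (y : ZMod 4) ^ 2 := by
    rw [← Int.natAbs_of_nonneg h0, Int.cast_natCast, hxy]
    push_cast
    rfl
  have h3 : (n : ZMod 4) = 3 := by
    rw [← ZMod.intCast_mod, Nat.cast_ofNat, hn]
    rfl
  have hsq : ∀ s t : ZMod 4, s ^ 2 + t ^ 2 ≠ 3 := by decide
  exact hsq _ _ (hsum ▸ h3)

theorem padicValInt_mul_eq_left_of_isCoprime {p : ℕ} [hp : Fact p.Prime] {a b : ℤ}
    (hab : IsCoprime a b) (hval : padicValInt p a ≠ 0) :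
    padicValInt p (a * b) = padicValInt p a := by
  have ha : a ≠ 0 := by rintro rfl; simp at hval
  have hpa : (p : ℤ) ∣ a := by
    simpa using (padicValInt_dvd_iff 1 a).mpr (Or.inr (Nat.one_le_iff_ne_zero.mpr hval))
  have hpb : ¬ (p : ℤ) ∣ b := fun hpb =>
    (Nat.prime_iff_prime_int.mp hp.out).not_isUnit (hab.isUnit_of_dvd' hpa hpb)
  have hb : b ≠ 0 := by rintro rfl; exact hpb (dvd_zero _)
  rw [padicValInt.mul ha hb, padicValInt.eq_zero_of_not_dvd hpb, add_zero]

def pellFactor (x : ℤ) : ℤ := (2 * x ^ 2 + 1) * (2 * x ^ 4 + 4 * x ^ 2 + 1)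

theorem odd_pellFactor (x : ℤ) : Odd (pellFactor x) :=
  Odd.mul ⟨x ^ 2, by ring⟩ ⟨x ^ 4 + 2 * x ^ 2, by ring⟩

theorem two_mul_sq_add_one_emod_four {x : ℤ} (hx : Odd x) : (2 * x ^ 2 + 1) % 4 = 3 := by
  obtain ⟨k, rfl⟩ := hx
  ring_nf
  omega

theorem isCoprime_two_mul_sq_add_one_self (x : ℤ) : IsCoprime (2 * x ^ 2 + 1) x :=
  ⟨1, -2 * x, by ring⟩

theorem isCoprime_two_mul_sq_add_one_quartic (x : ℤ) :
    IsCoprime (2 * x ^ 2 + 1) (2 * x ^ 4 + 4 * x ^ 2 + 1) :=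
  ⟨2 * x ^ 2 + 3, -2, by ring⟩

section PellSequence

variable {a : ℕ → ℤ}
  (hmult : ∀ n, 2 ≤ n → ∃ k : ℤ, Odd k ∧ a n = k * ∏ j ∈ Ico 1 n, pellFactor (a j))
include hmult

theorem pellFactor_dvd_of_lt {j n : ℕ} (hj : 1 ≤ j) (hjn : j < n) : pellFactor (a j) ∣ a n := by
  obtain ⟨k, -, hk⟩ := hmult n (by omega)
  rw [hk]
  exact (dvd_prod_of_mem _ (mem_Ico.mpr ⟨hj, hjn⟩)).mul_left k

theorem odd_of_one_le (ha1 : a 1 = 1) {n : ℕ} (hn : 1 ≤ n) : Odd (a n) := by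
  rcases hn.eq_or_lt with rfl | hn
  · rw [ha1]
    exact odd_one
  obtain ⟨k, hk, hkn⟩ := hmult n hn
  rw [hkn]
  exact hk.mul (prod_induction _ Odd (fun _ _ => Odd.mul) odd_one fun j _ => odd_pellFactor _)

theorem isCoprime_two_mul_sq_add_one_prod {n : ℕ} {s : Finset ℕ}
    (hs : ∀ j ∈ s, 1 ≤ j ∧ j < n) :
    IsCoprime (2 * a n ^ 2 + 1) (∏ j ∈ s, pellFactor (a j)) :=
  IsCoprime.prod_right fun j hj =>
    (isCoprime_two_mul_sq_add_one_self _).of_isCoprime_of_dvd_right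
      (pellFactor_dvd_of_lt hmult (hs j hj).1 (hs j hj).2)

end PellSequence

theorem independent_modulo_norms_general (a : ℕ → ℤ)
    (ha1 : a 1 = 1)
    (hmult : ∀ n, 2 ≤ n → ∃ k : ℤ, Odd k ∧
      a n = k * ∏ j ∈ Finset.Ico 1 n,
        ((2 * a j ^ 2 + 1) * (2 * a j ^ 4 + 4 * a j ^ 2 + 1))) :
    ∀ s : Finset ℕ, s.Nonempty → (∀ i ∈ s, 1 ≤ i) →
      ¬ ∃ u v : ℚ,
        (∏ i ∈ s, ((2 * (a i : ℚ) ^ 2 + 1) * (2 * (a i : ℚ) ^ 4 + 4 * (a i : ℚ) ^ 2 + 1)))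
          = u ^ 2 + v ^ 2 := by
  rintro s hs hs1 ⟨u, v, huv⟩
  set n := s.max' hs
  have hn : n ∈ s := s.max'_mem hs
  obtain ⟨p, hp, hp3, hval⟩ := Int.exists_prime_mod_four_eq_three_odd_padicValInt
    (by positivity) (two_mul_sq_add_one_emod_four (odd_of_one_le hmult ha1 (hs1 n hn)))
  have := Fact.mk hp
  have hcop : IsCoprime (2 * a n ^ 2 + 1)
      ((2 * a n ^ 4 + 4 * a n ^ 2 + 1) * ∏ j ∈ s.erase n, pellFactor (a j)) :=
    (isCoprime_two_mul_sq_add_one_quartic _).mul_right <|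
      isCoprime_two_mul_sq_add_one_prod hmult fun j hj =>
        ⟨hs1 j (mem_of_mem_erase hj), (s.le_max' j (mem_of_mem_erase hj)).lt_of_ne
          (ne_of_mem_erase hj)⟩
  have hsplit : ∏ i ∈ s, pellFactor (a i) = (2 * a n ^ 2 + 1) *
      ((2 * a n ^ 4 + 4 * a n ^ 2 + 1) * ∏ j ∈ s.erase n, pellFactor (a j)) := by
    rw [← mul_prod_erase s _ hn, pellFactor, mul_assoc]
  have heven := Int.even_padicValInt_of_cast_eq_sq_add_sq
    (n := ∏ i ∈ s, pellFactor (a i)) (by push_cast [pellFactor]; exact huv) hp3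
  rw [hsplit, padicValInt_mul_eq_left_of_isCoprime hcop hval.pos.ne'] at heven
  exact Nat.not_even_iff_odd.mpr hval heven

/-- For the sequence constructed from Pell-equation arguments (`a 1 = 1`, and for
`n ≥ 2` the term `a n` is an odd multiple of `∏_{1 ≤ j < n} (2a_j²+1)(2a_j⁴+4a_j²+1)`
with `2a_n²+1` not a square), the rationals `(2a_i²+1)(2a_i⁴+4a_i²+1)`, `i ≥ 1`, are
multiplicatively independent in `ℚ^×` modulo norms from `ℚ(i)^×`: no nonempty
product of distinct such factors is a norm `z·z̄ = u² + v²` from `ℚ(i)^×`. -/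
theorem independent_modulo_norms (a : ℕ → ℤ)
    (hpos : ∀ n, 1 ≤ n → 0 < a n) (ha1 : a 1 = 1)
    (hmult : ∀ n, 2 ≤ n → ∃ k : ℤ, Odd k ∧
      a n = k * ∏ j ∈ Finset.Ico 1 n,
        ((2 * a j ^ 2 + 1) * (2 * a j ^ 4 + 4 * a j ^ 2 + 1)))
    (hnsq : ∀ n, 1 ≤ n → ¬ IsSquare (2 * a n ^ 2 + 1)) :
    ∀ s : Finset ℕ, s.Nonempty → (∀ i ∈ s, 1 ≤ i) →
      ¬ ∃ u v : ℚ,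
        (∏ i ∈ s, ((2 * (a i : ℚ) ^ 2 + 1) * (2 * (a i : ℚ) ^ 4 + 4 * (a i : ℚ) ^ 2 + 1)))
          = u ^ 2 + v ^ 2 :=
  independent_modulo_norms_general a ha1 hmult
end
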